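/- Let λ > 0, L > 0, d ≥ 1, and x₁,…,x_T ∈ ℝ^d with ‖x_t‖₂² ≤ L for all t. With A_t = λI + Σ_{i<t} x_i x_iᵀ, we have Σ_{t=1}^T min(1, ‖x_t‖²_{A_t⁻¹}) ≤ 2·log(det A_{T+1} / det(λI)) ≤ 2 d log(1 + T L /(d λ)). -/

import Mathlib

open Matrix Finset

/-!
By the matrix determinant lemma, `det A_{t+1} = det A_t * (1 + ‖x_t‖²_{A_t⁻¹})`, so
`log (det A_T / det (λI))` telescopes to `∑ t, log (1 + ‖x_t‖²_{A_t⁻¹})`, and termwise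
`min 1 u ≤ 2 log (1 + u)`. For the second bound, AM-GM on the eigenvalues of `A_T` gives
`det A_T ≤ (tr A_T / d) ^ d ≤ (λ + T L / d) ^ d`.
-/

lemma min_one_le_two_mul_log_one_add {u : ℝ} (hu : 0 ≤ u) : min 1 u ≤ 2 * Real.log (1 + u) := by
  have hpos : 0 < 1 + u := by linarith
  calc min 1 u ≤ 2 * (u / (1 + u)) := by
        rw [mul_div_assoc', le_div_iff₀ hpos]
        rcases le_total u 1 with h | h <;> simp only [h, min_eq_left, min_eq_right] <;> nlinarith
    _ = 2 * (1 - (1 + u)⁻¹) := by field_simp; ring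
    _ ≤ 2 * Real.log (1 + u) := by gcongr; exact Real.one_sub_inv_le_log_of_pos hpos

lemma Finset.prod_le_sum_div_card_pow {ι : Type*} (s : Finset ι) {z : ι → ℝ}
    (hz : ∀ i ∈ s, 0 ≤ z i) : ∏ i ∈ s, z i ≤ ((∑ i ∈ s, z i) / #s) ^ #s := by
  rcases s.eq_empty_or_nonempty with rfl | hs
  · simp
  have hcard : (0 : ℝ) < #s := by exact_mod_cast hs.card_pos
  have hgm := Real.geom_mean_le_arith_mean s (fun _ ↦ 1) z (fun _ _ ↦ zero_le_one)
    (by simpa using hcard) hz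
  simp only [Real.rpow_one, one_mul, sum_const, nsmul_eq_mul, mul_one] at hgm
  calc ∏ i ∈ s, z i = ((∏ i ∈ s, z i) ^ ((#s : ℝ)⁻¹)) ^ #s := by
        rw [← Real.rpow_natCast, ← Real.rpow_mul (prod_nonneg hz), inv_mul_cancel₀ hcard.ne',
          Real.rpow_one]
    _ ≤ ((∑ i ∈ s, z i) / #s) ^ #s := by gcongr; exact Real.rpow_nonneg (prod_nonneg hz) _

lemma Matrix.PosSemidef.det_le_trace_div_card_pow {n : Type*} [Fintype n] [DecidableEq n]
    {A : Matrix n n ℝ} (hA : A.PosSemidef) :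
    A.det ≤ (A.trace / Fintype.card n) ^ Fintype.card n := by
  rw [hA.isHermitian.det_eq_prod_eigenvalues, hA.isHermitian.trace_eq_sum_eigenvalues]
  simpa using prod_le_sum_div_card_pow univ fun i _ ↦ hA.eigenvalues_nonneg i

lemma Matrix.det_add_vecMulVec {n α : Type*} [Fintype n] [DecidableEq n] [CommRing α]
    {A : Matrix n n α} (hA : IsUnit A.det) (u v : n → α) :
    (A + vecMulVec u v).det = A.det * (1 + v ⬝ᵥ A⁻¹ *ᵥ u) := by
  rw [vecMulVec_eq Unit, det_add_replicateCol_mul_replicateRow hA, det_unique (n := Unit),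
    add_apply, one_apply_eq, Matrix.mul_assoc, ← replicateCol_mulVec,
    replicateRow_mul_replicateCol_apply]

lemma Matrix.det_eq_det_zero_mul_prod_of_succ_eq_add_vecMulVec {n α : Type*} [Fintype n]
    [DecidableEq n] [CommRing α] {A : ℕ → Matrix n n α} {u v : ℕ → n → α}
    (hA : ∀ t, A (t + 1) = A t + vecMulVec (u t) (v t)) (hunit : ∀ t, IsUnit (A t).det) (t : ℕ) :
    (A t).det = (A 0).det * ∏ i ∈ range t, (1 + v i ⬝ᵥ (A i)⁻¹ *ᵥ u i) := by
  induction t with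
  | zero => simp
  | succ t ih => rw [hA, det_add_vecMulVec (hunit t), ih, prod_range_succ, mul_assoc]

lemma Matrix.posDef_smul_one_add_sum_vecMulVec_self {n ι : Type*} [Fintype n] [DecidableEq n]
    {lam : ℝ} (hlam : 0 < lam) (s : Finset ι) (x : ι → n → ℝ) :
    (lam • (1 : Matrix n n ℝ) + ∑ i ∈ s, vecMulVec (x i) (x i)).PosDef := by
  rw [smul_one_eq_diagonal]
  exact (PosDef.diagonal fun _ ↦ hlam).add_posSemidef
    (posSemidef_sum _ fun i _ ↦ by simpa using posSemidef_vecMulVec_self_star (x i))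

lemma Matrix.det_smul_one_add_sum_vecMulVec_self_le {n ι : Type*} [Fintype n] [DecidableEq n]
    {lam L : ℝ} (hlam : 0 < lam) (s : Finset ι) {x : ι → n → ℝ} (hx : ∀ i ∈ s, x i ⬝ᵥ x i ≤ L) :
    (lam • (1 : Matrix n n ℝ) + ∑ i ∈ s, vecMulVec (x i) (x i)).det ≤
      (lam + #s * L / Fintype.card n) ^ Fintype.card n := by
  have hPSD := (posDef_smul_one_add_sum_vecMulVec_self hlam s x).posSemidef
  have htrace : (lam • (1 : Matrix n n ℝ) + ∑ i ∈ s, vecMulVec (x i) (x i)).trace /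
      Fintype.card n ≤ lam + #s * L / Fintype.card n := by
    rcases (Fintype.card n).eq_zero_or_pos with hcard | hcard
    · simpa [hcard] using hlam.le
    have hsum : ∑ i ∈ s, x i ⬝ᵥ x i ≤ #s * L := by
      simpa using sum_le_sum hx
    rw [trace_add, trace_smul, trace_one, trace_sum, smul_eq_mul, add_div,
      mul_div_cancel_right₀ _ (by positivity)]
    simp only [trace_vecMulVec]
    gcongr
  exact hPSD.det_le_trace_div_card_pow.trans
    (pow_le_pow_left₀ (div_nonneg hPSD.trace_nonneg (Nat.cast_nonneg _)) htrace _)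

theorem stmt17_general {d : ℕ} (T : ℕ) (lam L : ℝ) (hlam : 0 < lam)
    (x : ℕ → Fin d → ℝ) (hx : ∀ t, ∑ j, (x t j)^2 ≤ L)
    (A : ℕ → Matrix (Fin d) (Fin d) ℝ)
    (hA : ∀ t, A t = lam • (1 : Matrix (Fin d) (Fin d) ℝ) +
        ∑ i ∈ Finset.range t, vecMulVec (x i) (x i)) :
    (∑ t ∈ Finset.range T, min 1 (x t ⬝ᵥ (A t)⁻¹.mulVec (x t))
        ≤ 2 * Real.log ((A T).det / lam ^ d)) ∧
      2 * Real.log ((A T).det / lam ^ d) ≤ 2 * d * Real.log (1 + T * L / (d * lam)) := by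
  have hPD : ∀ t, (A t).PosDef := fun t ↦
    hA t ▸ posDef_smul_one_add_sum_vecMulVec_self hlam _ x
  have hquad : ∀ t, 0 ≤ x t ⬝ᵥ (A t)⁻¹ *ᵥ x t := fun t ↦ by
    simpa using (hPD t).inv.posSemidef.dotProduct_mulVec_nonneg (x t)
  have hdet : (A T).det / lam ^ d = ∏ t ∈ range T, (1 + x t ⬝ᵥ (A t)⁻¹ *ᵥ x t) := by
    rw [det_eq_det_zero_mul_prod_of_succ_eq_add_vecMulVec (u := x) (v := x)
      (fun t ↦ by simp [hA, sum_range_succ, add_assoc]) (fun t ↦ (hPD t).det_pos.ne'.isUnit) T]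
    simp [hA 0, hlam.ne']
  have hratio : (A T).det / lam ^ d ≤ (1 + T * L / (d * lam)) ^ d := by
    rw [div_le_iff₀ (by positivity)]
    calc (A T).det ≤ (lam + T * L / d) ^ d := by
          have := det_smul_one_add_sum_vecMulVec_self_le hlam (range T)
            fun t _ ↦ by simpa [dotProduct, ← sq] using hx t
          rwa [card_range, Fintype.card_fin, ← hA] at this
      _ = (1 + T * L / (d * lam)) ^ d * lam ^ d := by
          rw [← mul_pow, add_mul, one_mul, div_mul_eq_mul_div, mul_div_mul_right _ _ hlam.ne',
            add_comm]
  refine ⟨?_, ?_⟩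
  · rw [hdet, Real.log_prod fun t _ ↦ by linarith [hquad t], mul_sum]
    exact sum_le_sum fun t _ ↦ min_one_le_two_mul_log_one_add (hquad t)
  · rw [mul_assoc, ← Real.log_pow]
    gcongr
    exact div_pos (hPD T).det_pos (by positivity)

theorem stmt17 {d : ℕ} (hd : 1 ≤ d) (T : ℕ) (lam L : ℝ) (hlam : 0 < lam) (hL : 0 < L)
    (x : ℕ → Fin d → ℝ) (hx : ∀ t, ∑ j, (x t j)^2 ≤ L)
    (A : ℕ → Matrix (Fin d) (Fin d) ℝ)
    (hA : ∀ t, A t = lam • (1 : Matrix (Fin d) (Fin d) ℝ) +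
        ∑ i ∈ Finset.range t, vecMulVec (x i) (x i)) :
    (∑ t ∈ Finset.range T, min 1 (x t ⬝ᵥ (A t)⁻¹.mulVec (x t))
        ≤ 2 * Real.log ((A T).det / lam ^ d)) ∧
      2 * Real.log ((A T).det / lam ^ d) ≤ 2 * d * Real.log (1 + T * L / (d * lam)) :=
  stmt17_general T lam L hlam x hx A hA
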